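/- arXiv:2603.13184 — 2 statements merged into one kernel-verified Lean document; each statement's English description precedes it below -/
import Mathlib

section
/- Let (X,d) be a metric space, let P ⊆ X be a nonempty finite set, and let k ≥ 1 be an integer with k ≤ |P|. Then for every valid farthest-first output C on P with k centers, cost(C,P) ≤ 2·OPT(P,k). -/
/-!
Let `r = cost(C, P)` be attained at `s ∈ P`. Farthest-first selection makes the `k + 1` points
`c₁, …, c_k, s` pairwise at distance at least `r`: each `c_j` was at least as far from
`c₁, …, c_{j-1}` as `s` was, and `s` is at distance `r` from all of `C`. An optimal set of
`k` centers must serve two of these `k + 1` points from the same center, so the triangle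
inequality gives `r ≤ 2 · OPT(P, k)`.
-/

/-- `setDist s C` is the distance from the point `s` to the set `C`,
i.e. the infimum (for nonempty finite `C`, the minimum) of `dist s c` over `c ∈ C`. -/
noncomputable def setDist {X : Type*} [MetricSpace X] (s : X) (C : Set X) : ℝ :=
  sInf ((fun c => dist s c) '' C)

/-- `cost C S` is the supremum (for nonempty finite `S`, the maximum) over `s ∈ S`
of the distance from `s` to the center set `C`. -/
noncomputable def cost {X : Type*} [MetricSpace X] (C S : Set X) : ℝ :=
  sSup ((fun s => setDist s C) '' S)

/-- `kOPT P k` is the optimal `k`-center cost on the finite set `P`: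
the minimum of `cost C P` over subsets `C ⊆ P` with `|C| = k`. -/
noncomputable def kOPT {X : Type*} [MetricSpace X] (P : Finset X) (k : ℕ) : ℝ :=
  sInf { r : ℝ | ∃ C : Finset X, C ⊆ P ∧ C.card = k ∧ cost (C : Set X) (P : Set X) = r }

/-- `IsFF S k C` : `C` is a valid farthest-first output on `S` with `k` centers,
i.e. there is an enumeration `c 0, …, c (k-1)` of the `k` distinct points of `C`,
all in `S`, such that each `c i` (for `i ≥ 1`) maximizes the distance to the
previously chosen centers over all points of `S`. -/
def IsFF {X : Type*} [MetricSpace X] (S : Finset X) (k : ℕ) (C : Finset X) : Prop :=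
  ∃ c : Fin k → X, Function.Injective c ∧ (∀ i, c i ∈ S) ∧
    (↑C : Set X) = Set.range c ∧
    ∀ i : Fin k, 0 < (i : ℕ) → ∀ s ∈ S,
      setDist s (c '' {j | j < i}) ≤ setDist (c i) (c '' {j | j < i})

section KCenter

variable {X : Type*} [MetricSpace X]

lemma bddBelow_image_dist (s : X) (C : Set X) : BddBelow ((fun c => dist s c) '' C) :=
  ⟨0, by rintro _ ⟨_, _, rfl⟩; exact dist_nonneg⟩

lemma setDist_le_dist {s c : X} {C : Set X} (hc : c ∈ C) : setDist s C ≤ dist s c :=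
  csInf_le (bddBelow_image_dist s C) ⟨c, hc, rfl⟩

lemma setDist_anti {s : X} {C D : Set X} (h : C ⊆ D) (hC : C.Nonempty) :
    setDist s D ≤ setDist s C :=
  csInf_le_csInf (bddBelow_image_dist s D) (hC.image _) (Set.image_mono h)

lemma exists_dist_eq_setDist (s : X) {C : Set X} (hC : C.Finite) (hne : C.Nonempty) :
    ∃ o ∈ C, dist s o = setDist s C :=
  (hne.image _).csInf_mem (hC.image _)

lemma setDist_le_cost {C S : Set X} (hS : S.Finite) {s : X} (hs : s ∈ S) :
    setDist s C ≤ cost C S :=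
  le_csSup (hS.image _).bddAbove ⟨s, hs, rfl⟩

lemma exists_setDist_eq_cost (C : Set X) {S : Set X} (hS : S.Finite) (hne : S.Nonempty) :
    ∃ s ∈ S, setDist s C = cost C S :=
  (hne.image _).csSup_mem (hS.image _)

lemma exists_cost_eq_kOPT {P : Finset X} {k : ℕ} (hk : k ≤ P.card) :
    ∃ C : Finset X, C ⊆ P ∧ C.card = k ∧ cost (C : Set X) (P : Set X) = kOPT P k := by
  set T : Set ℝ :=
    { r | ∃ C : Finset X, C ⊆ P ∧ C.card = k ∧ cost (C : Set X) (P : Set X) = r }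
  have hfin : T.Finite := by
    refine (P.powerset.image fun C : Finset X => cost (C : Set X) (P : Set X)).finite_toSet
      |>.subset ?_
    rintro _ ⟨C, hCP, -, rfl⟩
    exact Finset.mem_coe.2 (Finset.mem_image_of_mem _ (Finset.mem_powerset.2 hCP))
  obtain ⟨Q, hQP, hQ⟩ := P.exists_subset_card_eq hk
  exact Set.Nonempty.csInf_mem (⟨_, Q, hQP, hQ, rfl⟩ : T.Nonempty) hfin

/-- Pigeonhole: two of the points share a nearest center in `D`. -/
lemma le_two_mul_cost_of_pairwise {ι : Type*} [Fintype ι] {p : ι → X} {S : Set X}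
    (hS : S.Finite) (hp : ∀ i, p i ∈ S) {D : Finset X} (hD : D.Nonempty)
    (hcard : D.card < Fintype.card ι) {r : ℝ}
    (hsep : Pairwise fun i j => r ≤ dist (p i) (p j)) :
    r ≤ 2 * cost (D : Set X) S := by
  choose g hgD hg using fun i => exists_dist_eq_setDist (p i) D.finite_toSet (by simpa using hD)
  have hg_le : ∀ i, dist (p i) (g i) ≤ cost (D : Set X) S := fun i =>
    (hg i).trans_le (setDist_le_cost hS (hp i))
  obtain ⟨i, j, hij, hgij⟩ := Fintype.exists_ne_map_eq_of_card_lt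
    (fun i => (⟨g i, hgD i⟩ : D)) (by simpa using hcard)
  have hgij : g i = g j := congrArg Subtype.val hgij
  calc r ≤ dist (p i) (p j) := hsep hij
    _ ≤ dist (p i) (g i) + dist (p j) (g j) := by
        rw [hgij, dist_comm (p j)]; exact dist_triangle _ _ _
    _ ≤ 2 * cost (D : Set X) S := by linarith [hg_le i, hg_le j]

lemma setDist_range_le_dist_of_farthestFirst {S : Finset X} {k : ℕ} {c : Fin k → X}
    (hfar : ∀ i : Fin k, 0 < (i : ℕ) → ∀ s ∈ S,
      setDist s (c '' {j | j < i}) ≤ setDist (c i) (c '' {j | j < i}))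
    {s : X} (hs : s ∈ S) {i j : Fin k} (hij : i < j) :
    setDist s (Set.range c) ≤ dist (c i) (c j) := by
  have hi : c i ∈ c '' {t | t < j} := Set.mem_image_of_mem c hij
  calc setDist s (Set.range c) ≤ setDist s (c '' {t | t < j}) :=
        setDist_anti (Set.image_subset_range _ _) ⟨_, hi⟩
    _ ≤ setDist (c j) (c '' {t | t < j}) := hfar j (Nat.zero_lt_of_lt hij) s hs
    _ ≤ dist (c i) (c j) := by rw [dist_comm]; exact setDist_le_dist hi

end KCenter

theorem stmt_0_general {X : Type*} [MetricSpace X] (P : Finset X)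
    (k : ℕ) (hk : 1 ≤ k) (hkP : k ≤ P.card)
    (C : Finset X) (hC : IsFF P k C) :
    cost (C : Set X) (P : Set X) ≤ 2 * kOPT P k := by
  obtain ⟨c, -, hcP, hCc, hfar⟩ := hC
  obtain ⟨D, -, hDk, hDopt⟩ := exists_cost_eq_kOPT hkP
  have hP : (P : Set X).Nonempty := by simpa using Finset.card_pos.1 (hk.trans hkP)
  obtain ⟨s, hsP, hs⟩ := exists_setDist_eq_cost (C : Set X) P.finite_toSet hP
  have hr : cost (C : Set X) P = setDist s (Set.range c) := by rw [← hs, hCc]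
  -- the `k + 1` points `s, c 0, …, c (k-1)`, with `none` standing for `s`
  let p : Option (Fin k) → X := fun o => o.elim s c
  have hsep : Pairwise fun o o' => cost (C : Set X) P ≤ dist (p o) (p o') := by
    rintro (_ | i) (_ | j) hne
    · exact absurd rfl hne
    · exact hr.trans_le (setDist_le_dist (Set.mem_range_self j))
    · exact hr.trans_le ((setDist_le_dist (Set.mem_range_self i)).trans_eq (dist_comm _ _))
    · rcases lt_or_gt_of_ne (Option.some_injective _ |>.ne_iff.1 hne) with hij | hij
      · exact hr.trans_le (setDist_range_le_dist_of_farthestFirst hfar hsP hij)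
      · exact hr.trans_le ((setDist_range_le_dist_of_farthestFirst hfar hsP hij).trans_eq
          (dist_comm _ _))
  rw [← hDopt]
  refine le_two_mul_cost_of_pairwise P.finite_toSet ?_ ?_ (by simp [hDk]) hsep
  · rintro (_ | i)
    exacts [hsP, hcP i]
  · exact Finset.card_pos.1 (hDk ▸ hk)

/-- Gonzalez' theorem: every valid farthest-first output `C` on `P` with `k` centers
satisfies `cost(C, P) ≤ 2 · OPT(P, k)`. -/
theorem stmt_0 {X : Type*} [MetricSpace X] (P : Finset X) (hP : P.Nonempty)
    (k : ℕ) (hk : 1 ≤ k) (hkP : k ≤ P.card)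
    (C : Finset X) (hC : IsFF P k C) :
    cost (C : Set X) (P : Set X) ≤ 2 * kOPT P k :=
  stmt_0_general P k hk hkP C hC
end

section
/- Let (X,d) be a metric space, let S ⊆ X be a nonempty finite set, let k ≥ 1 with k ≤ |S|, and let C be a valid farthest-first output on S with k centers. Set r := cost(C,S) and let x ∈ S be a point with d(x,C) = r. Then any two distinct points u, v of the set C ∪ {x} satisfy d(u,v) ≥ r. -/
/-! The center `c i` chosen at step `i` is a farthest point of `S` from the earlier centers,
so every point of `S` is within `d(c i, {c j | j < i}) ≤ d(c i, c j)` of the centers. Hence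
the cost is at most the distance between any two centers, and by definition of `x` it is at
most the distance from `x` to any center. -/

section

variable {X : Type*} [MetricSpace X]

lemma setDist_le_dist_s1 (s : X) {A : Set X} (hA : A.Finite) {a : X} (ha : a ∈ A) :
    setDist s A ≤ dist s a :=
  csInf_le (hA.image _).bddBelow ⟨a, ha, rfl⟩

lemma setDist_anti_s1 (s : X) {A B : Set X} (hB : B.Finite) (hAB : A ⊆ B) (hA : A.Nonempty) :
    setDist s B ≤ setDist s A :=
  csInf_le_csInf (hB.image _).bddBelow (hA.image _) (Set.image_mono hAB)

lemma cost_le {C S : Set X} (hS : S.Nonempty) {M : ℝ} (h : ∀ s ∈ S, setDist s C ≤ M) :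
    cost C S ≤ M :=
  csSup_le (hS.image _) (Set.forall_mem_image.2 h)

lemma cost_le_dist_of_farthestFirst {S : Finset X} {k : ℕ} {c : Fin k → X}
    (hmem : ∀ i, c i ∈ S)
    (hff : ∀ i : Fin k, 0 < (i : ℕ) → ∀ s ∈ S,
      setDist s (c '' {j | j < i}) ≤ setDist (c i) (c '' {j | j < i}))
    {i j : Fin k} (hji : j < i) :
    cost (Set.range c) (S : Set X) ≤ dist (c i) (c j) := by
  have hfin : (Set.range c).Finite := Set.finite_range c
  have hprev : c '' {j' | j' < i} ⊆ Set.range c := Set.image_subset_range _ _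
  have hprev_ne : (c '' {j' | j' < i}).Nonempty := ⟨c j, j, hji, rfl⟩
  calc cost (Set.range c) (S : Set X)
      ≤ setDist (c i) (c '' {j' | j' < i}) :=
        cost_le ⟨c j, hmem j⟩ fun s hs =>
          (setDist_anti_s1 s hfin hprev hprev_ne).trans (hff i ((Nat.zero_le j).trans_lt hji) s hs)
    _ ≤ dist (c i) (c j) := setDist_le_dist_s1 _ (hfin.subset hprev) ⟨j, hji, rfl⟩

lemma IsFF.pairwise_cost_le_dist {S : Finset X} {k : ℕ} {C : Finset X} (hC : IsFF S k C) :
    (C : Set X).Pairwise fun u v => cost (C : Set X) (S : Set X) ≤ dist u v := by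
  obtain ⟨c, -, hmem, hrange, hff⟩ := hC
  rw [hrange]
  refine Pairwise.range_pairwise fun i j hij => ?_
  change _ ≤ dist (c i) (c j)
  rcases hij.lt_or_gt with hij | hij
  · exact dist_comm (c j) (c i) ▸ cost_le_dist_of_farthestFirst hmem hff hij
  · exact cost_le_dist_of_farthestFirst hmem hff hij

end

theorem stmt_1_general {X : Type*} [MetricSpace X] (S : Finset X)
    (k : ℕ)
    (C : Finset X) (hC : IsFF S k C)
    (r : ℝ) (hr : r = cost (C : Set X) (S : Set X))
    (x : X) (hxr : setDist x (C : Set X) = r) :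
    ∀ u ∈ (C : Set X) ∪ {x}, ∀ v ∈ (C : Set X) ∪ {x}, u ≠ v → r ≤ dist u v := by
  have hxC : ∀ u ∈ (C : Set X), r ≤ dist x u := fun u hu =>
    hxr ▸ setDist_le_dist_s1 x C.finite_toSet hu
  change ((C : Set X) ∪ {x}).Pairwise fun u v => r ≤ dist u v
  rw [Set.union_singleton, Set.pairwise_insert]
  exact ⟨hr ▸ IsFF.pairwise_cost_le_dist hC,
    fun u hu _ => ⟨hxC u hu, dist_comm x u ▸ hxC u hu⟩⟩

/-- If `C` is a valid farthest-first output on `S` with `k` centers, `r := cost(C,S)`,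
and `x ∈ S` satisfies `d(x,C) = r`, then any two distinct points of `C ∪ {x}` are at
distance at least `r` from each other. -/
theorem stmt_1 {X : Type*} [MetricSpace X] (S : Finset X) (hS : S.Nonempty)
    (k : ℕ) (hk : 1 ≤ k) (hkS : k ≤ S.card)
    (C : Finset X) (hC : IsFF S k C)
    (r : ℝ) (hr : r = cost (C : Set X) (S : Set X))
    (x : X) (hx : x ∈ S) (hxr : setDist x (C : Set X) = r) :
    ∀ u ∈ (C : Set X) ∪ {x}, ∀ v ∈ (C : Set X) ∪ {x}, u ≠ v → r ≤ dist u v :=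
  stmt_1_general S k C hC r hr x hxr
end
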